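/- Let Σ' be a quasifan in a lattice N', let τ₁ and τ₂ be rational polyhedral cones in N^ℝ for a lattice N, and let F : N → N' be a ℤ-linear map with F^ℝ(τ₁) ⊆ τ₁' and F^ℝ(τ₂) ⊆ τ₂' for cones τ₁', τ₂' ∈ Σ'. Let ρ₂ be the minimal face of τ₂ containing τ₁ ∩ τ₂. Then F^ℝ(ρ₂) ⊆ τ₁' ∩ τ₂'; in particular F^ℝ(conv(τ₁ ∪ ρ₂)) ⊆ τ₁'. -/

import Mathlib

/-! Cut down to `ρ₂`, the preimage under `F^ℝ` of the face `τ₂' ∩ τ₁'` of `τ₂'` is again a face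
of `τ₂`, and it contains `τ₁ ∩ τ₂`; minimality of `ρ₂` puts `ρ₂` inside it. The second claim
follows because `(F^ℝ)⁻¹ τ₁'` is a cone containing `τ₁ ∪ ρ₂`. -/

open Set

/-- The coercion of an integral vector in `ℤ^n` to a real vector in `ℝ^n`. -/
def toR {n : ℕ} (v : Fin n → ℤ) : Fin n → ℝ := fun i => (v i : ℝ)

/-- The scalar extension `F^ℝ : N^ℝ → N'^ℝ` of a `ℤ`-linear map `F : N → N'`,
where `N = ℤ^n`, `N' = ℤ^m`. -/
noncomputable def extR {n m : ℕ} (F : (Fin n → ℤ) →ₗ[ℤ] (Fin m → ℤ)) :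
    (Fin n → ℝ) →ₗ[ℝ] (Fin m → ℝ) :=
  (Matrix.of fun i j => ((F (Pi.single j 1)) i : ℝ)).mulVecLin

/-- A convex cone: a subset containing `0` that is closed under addition and
under multiplication by nonnegative scalars. -/
def IsCone {V : Type*} [AddCommGroup V] [Module ℝ V] (σ : Set V) : Prop :=
  0 ∈ σ ∧ (∀ x ∈ σ, ∀ y ∈ σ, x + y ∈ σ) ∧ ∀ c : ℝ, 0 ≤ c → ∀ x ∈ σ, c • x ∈ σ

/-- The convex-cone hull of a set: the smallest convex cone containing it. -/
def coneHull {V : Type*} [AddCommGroup V] [Module ℝ V] (s : Set V) : Set V :=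
  ⋂₀ {σ | IsCone σ ∧ s ⊆ σ}

/-- A rational polyhedral cone in `ℝ^n`: a convex cone generated by finitely
many vectors of the lattice `ℤ^n`. -/
def IsRatCone {n : ℕ} (σ : Set (Fin n → ℝ)) : Prop :=
  ∃ s : Finset (Fin n → ℤ), σ = coneHull (toR '' ↑s)

/-- A cone is strictly convex if it contains no nonzero linear subspace,
equivalently `σ ∩ (-σ) = {0}`. -/
def IsStrictlyConvexCone {V : Type*} [AddCommGroup V] [Module ℝ V] (σ : Set V) : Prop :=
  ∀ x ∈ σ, -x ∈ σ → x = 0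

/-- `τ` is a face of the convex cone `σ`: a subcone such that whenever
`x, y ∈ σ` and `x + y ∈ τ`, then `x, y ∈ τ`. -/
def IsFaceOf {V : Type*} [AddCommGroup V] [Module ℝ V] (τ σ : Set V) : Prop :=
  IsCone τ ∧ τ ⊆ σ ∧ ∀ x ∈ σ, ∀ y ∈ σ, x + y ∈ τ → x ∈ τ ∧ y ∈ τ

/-- A system of `N`-cones: a finite set of rational polyhedral cones in `ℝ^n`. -/
def IsConeSystem {n : ℕ} (S : Set (Set (Fin n → ℝ))) : Prop :=
  S.Finite ∧ ∀ σ ∈ S, IsRatCone σ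

/-- A quasifan: a finite set of rational polyhedral cones, closed under taking
faces, in which any two cones intersect in a common face. -/
def IsQuasifan {n : ℕ} (Δ : Set (Set (Fin n → ℝ))) : Prop :=
  IsConeSystem Δ ∧ (∀ σ ∈ Δ, ∀ τ, IsFaceOf τ σ → τ ∈ Δ) ∧
    ∀ σ ∈ Δ, ∀ σ' ∈ Δ, IsFaceOf (σ ∩ σ') σ

/-- A fan: a quasifan all of whose cones are strictly convex. -/
def IsFan {n : ℕ} (Δ : Set (Set (Fin n → ℝ))) : Prop :=
  IsQuasifan Δ ∧ ∀ σ ∈ Δ, IsStrictlyConvexCone σ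

/-- `F` defines a map of systems of cones (in particular of (quasi-)fans):
every cone of `S` is mapped by `F^ℝ` into some cone of `S'`. -/
def IsConeMap {n m : ℕ} (F : (Fin n → ℤ) →ₗ[ℤ] (Fin m → ℤ))
    (S : Set (Set (Fin n → ℝ))) (S' : Set (Set (Fin m → ℝ))) : Prop :=
  ∀ σ ∈ S, ∃ τ ∈ S', extR F '' σ ⊆ τ

/-- A sublattice `L ⊆ ℤ^n` is primitive if the quotient `ℤ^n/L` is
torsion-free. -/
def IsPrimitive {n : ℕ} (L : Submodule ℤ (Fin n → ℤ)) : Prop :=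
  ∀ (v : Fin n → ℤ) (k : ℤ), k ≠ 0 → k • v ∈ L → v ∈ L

/-- The set of maximal cones of a system of cones. -/
def maxCones {n : ℕ} (Δ : Set (Set (Fin n → ℝ))) : Set (Set (Fin n → ℝ)) :=
  {σ ∈ Δ | ∀ τ ∈ Δ, σ ⊆ τ → σ = τ}

/-- `ρ` is a ray (one-dimensional cone) of `Δ`. -/
def IsRay {n : ℕ} (Δ : Set (Set (Fin n → ℝ))) (ρ : Set (Fin n → ℝ)) : Prop :=
  ρ ∈ Δ ∧ Module.finrank ℝ (Submodule.span ℝ ρ) = 1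

/-- `Δt`, together with the surjection `P : ℤ^n → ℤ^m` onto the quotient of
`ℤ^n` by the primitive sublattice `L̂ = ker P ⊇ L`, is the quotient fan of the
system of cones `S` by `L`: the projection `P` defines a map of systems of
cones from `S` to the fan `Δt` and every map of systems of cones `F` from `S`
to a fan with `F(L) = 0` factors through `P` via a map of fans. -/
def IsQuotientFan {n m : ℕ} (S : Set (Set (Fin n → ℝ))) (L : Submodule ℤ (Fin n → ℤ))
    (P : (Fin n → ℤ) →ₗ[ℤ] (Fin m → ℤ)) (Δt : Set (Set (Fin m → ℝ))) : Prop :=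
  Function.Surjective P ∧ L ≤ LinearMap.ker P ∧ IsPrimitive (LinearMap.ker P) ∧
  IsFan Δt ∧ IsConeMap P S Δt ∧
  ∀ (k : ℕ) (F : (Fin n → ℤ) →ₗ[ℤ] (Fin k → ℤ)) (Δ' : Set (Set (Fin k → ℝ))),
    IsFan Δ' → IsConeMap F S Δ' → L ≤ LinearMap.ker F →
    ∃ Ft : (Fin m → ℤ) →ₗ[ℤ] (Fin k → ℤ), IsConeMap Ft Δt Δ' ∧ F = Ft.comp P

section Cones

variable {V W : Type*} [AddCommGroup V] [Module ℝ V] [AddCommGroup W] [Module ℝ W]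

lemma isCone_coneHull (s : Set V) : IsCone (coneHull s) :=
  ⟨fun _ hσ => hσ.1.1,
   fun _ hx _ hy σ hσ => hσ.1.2.1 _ (hx σ hσ) _ (hy σ hσ),
   fun c hc _ hx σ hσ => hσ.1.2.2 c hc _ (hx σ hσ)⟩

lemma coneHull_subset {s σ : Set V} (hσ : IsCone σ) (hs : s ⊆ σ) : coneHull s ⊆ σ :=
  sInter_subset_of_mem ⟨hσ, hs⟩

lemma IsCone.inter {σ τ : Set V} (hσ : IsCone σ) (hτ : IsCone τ) : IsCone (σ ∩ τ) :=
  ⟨⟨hσ.1, hτ.1⟩, fun x hx y hy => ⟨hσ.2.1 x hx.1 y hy.1, hτ.2.1 x hx.2 y hy.2⟩,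
   fun c hc x hx => ⟨hσ.2.2 c hc x hx.1, hτ.2.2 c hc x hx.2⟩⟩

lemma IsCone.preimage {σ : Set W} (hσ : IsCone σ) (f : V →ₗ[ℝ] W) : IsCone (f ⁻¹' σ) :=
  ⟨by simpa only [mem_preimage, map_zero] using hσ.1,
   fun x hx y hy => by simpa only [mem_preimage, map_add] using hσ.2.1 _ hx _ hy,
   fun c hc x hx => by simpa only [mem_preimage, map_smul] using hσ.2.2 c hc _ hx⟩

lemma IsFaceOf.inter_preimage {φ σ : Set V} {κ σ' : Set W} {f : V →ₗ[ℝ] W}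
    (hφ : IsFaceOf φ σ) (hf : f '' σ ⊆ σ') (hκ : IsFaceOf κ σ') :
    IsFaceOf (φ ∩ f ⁻¹' κ) σ := by
  refine ⟨hφ.1.inter (hκ.1.preimage f), inter_subset_left.trans hφ.2.1, ?_⟩
  intro x hx y hy hxy
  obtain ⟨hxφ, hyφ⟩ := hφ.2.2 x hx y hy hxy.1
  have hfxy : f x + f y ∈ κ := by simpa only [mem_preimage, map_add] using hxy.2
  obtain ⟨hfx, hfy⟩ := hκ.2.2 _ (hf (mem_image_of_mem f hx)) _ (hf (mem_image_of_mem f hy)) hfxy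
  exact ⟨⟨hxφ, hfx⟩, ⟨hyφ, hfy⟩⟩

end Cones

lemma IsRatCone.isCone {n : ℕ} {σ : Set (Fin n → ℝ)} (h : IsRatCone σ) : IsCone σ := by
  obtain ⟨s, rfl⟩ := h
  exact isCone_coneHull _

theorem loop_step_invariant_general {n m : ℕ} (τ₁ τ₂ : Set (Fin n → ℝ))
    (Sig' : Set (Set (Fin m → ℝ))) (hSig' : IsQuasifan Sig')
    (F : (Fin n → ℤ) →ₗ[ℤ] (Fin m → ℤ))
    (τ₁' τ₂' : Set (Fin m → ℝ)) (hτ₁' : τ₁' ∈ Sig') (hτ₂' : τ₂' ∈ Sig')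
    (hF₁ : extR F '' τ₁ ⊆ τ₁') (hF₂ : extR F '' τ₂ ⊆ τ₂')
    (ρ₂ : Set (Fin n → ℝ)) (hρface : IsFaceOf ρ₂ τ₂) (hρcont : τ₁ ∩ τ₂ ⊆ ρ₂)
    (hρmin : ∀ φ, IsFaceOf φ τ₂ → τ₁ ∩ τ₂ ⊆ φ → ρ₂ ⊆ φ) :
    extR F '' ρ₂ ⊆ τ₁' ∩ τ₂' ∧ extR F '' coneHull (τ₁ ∪ ρ₂) ⊆ τ₁' := by
  obtain ⟨⟨-, hrat⟩, -, hinter⟩ := hSig'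
  have hface : IsFaceOf (ρ₂ ∩ extR F ⁻¹' (τ₂' ∩ τ₁')) τ₂ :=
    hρface.inter_preimage hF₂ (hinter τ₂' hτ₂' τ₁' hτ₁')
  have hcont : τ₁ ∩ τ₂ ⊆ ρ₂ ∩ extR F ⁻¹' (τ₂' ∩ τ₁') := fun x hx =>
    ⟨hρcont hx, hF₂ (mem_image_of_mem _ hx.2), hF₁ (mem_image_of_mem _ hx.1)⟩
  have hρ : extR F '' ρ₂ ⊆ τ₁' ∩ τ₂' := image_subset_iff.mpr fun _ hx =>
    (hρmin _ hface hcont hx).2.symm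
  refine ⟨hρ, image_subset_iff.mpr (coneHull_subset ((hrat τ₁' hτ₁').isCone.preimage _) ?_)⟩
  exact union_subset (image_subset_iff.mp hF₁) fun x hx => (hρ (mem_image_of_mem _ hx)).1

/-- Let `Sig'` be a quasifan in a lattice `N'`, let `τ₁`,
`τ₂` be rational polyhedral cones in `N^ℝ` and let `F : N → N'` be a
`ℤ`-linear map with `F^ℝ(τ₁) ⊆ τ₁'` and `F^ℝ(τ₂) ⊆ τ₂'` for cones
`τ₁', τ₂' ∈ Sig'`. Let `ρ₂` be the minimal face of `τ₂` containing
`τ₁ ∩ τ₂`. Then `F^ℝ(ρ₂) ⊆ τ₁' ∩ τ₂'`; in particular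
`F^ℝ(conv(τ₁ ∪ ρ₂)) ⊆ τ₁'`. -/
theorem loop_step_invariant {n m : ℕ} (τ₁ τ₂ : Set (Fin n → ℝ))
    (hτ₁ : IsRatCone τ₁) (hτ₂ : IsRatCone τ₂)
    (Sig' : Set (Set (Fin m → ℝ))) (hSig' : IsQuasifan Sig')
    (F : (Fin n → ℤ) →ₗ[ℤ] (Fin m → ℤ))
    (τ₁' τ₂' : Set (Fin m → ℝ)) (hτ₁' : τ₁' ∈ Sig') (hτ₂' : τ₂' ∈ Sig')
    (hF₁ : extR F '' τ₁ ⊆ τ₁') (hF₂ : extR F '' τ₂ ⊆ τ₂')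
    (ρ₂ : Set (Fin n → ℝ)) (hρface : IsFaceOf ρ₂ τ₂) (hρcont : τ₁ ∩ τ₂ ⊆ ρ₂)
    (hρmin : ∀ φ, IsFaceOf φ τ₂ → τ₁ ∩ τ₂ ⊆ φ → ρ₂ ⊆ φ) :
    extR F '' ρ₂ ⊆ τ₁' ∩ τ₂' ∧ extR F '' coneHull (τ₁ ∪ ρ₂) ⊆ τ₁' :=
  loop_step_invariant_general τ₁ τ₂ Sig' hSig' F τ₁' τ₂' hτ₁' hτ₂' hF₁ hF₂ ρ₂ hρface hρcont hρmin
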